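/- arXiv:1012.1302 — 2 statements merged into one kernel-verified Lean document; each statement's English description precedes it below -/
import Mathlib

section
/- Let m > 0 and define ψ : ℝ³∖{0} → ℝ³∖{0} by ψ(x) = −(m²/4) x/‖x‖². Then: (a) for every x ≠ 0 and v ∈ ℝ³, (1 + m/(2‖ψ(x)‖))² ‖Dψ_x(v)‖ = (1 + m/(2‖x‖))² ‖v‖ (so ψ is an isometry of the Schwarzschild metric); (b) ψ(ψ(x)) = x for all x ≠ 0; (c) ψ(x) ≠ x for all x ≠ 0. Consequently ψ generates a fixed-point-free ℤ₂-action on ℝ³∖{0} by isometries of the Schwarzschild metric. -/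
/-!
`ψ` is minus the inversion in the sphere of radius `R = m/2` about the origin. The inversion is an
involution commuting with `x ↦ -x`, and its differential at `x` is `(R/‖x‖)²` times a reflection.
Since `‖ψ x‖ = R²/‖x‖`, the factor `(1 + R/‖ψ x‖)² = (‖x‖/R)² (1 + R/‖x‖)²` exactly compensates
the stretching `(R/‖x‖)²`. A fixed point would satisfy `(1 + R²/‖x‖²) x = 0`.
-/

open EuclideanGeometry

namespace Schwarzschild

variable {E : Type*} [NormedAddCommGroup E] [InnerProductSpace ℝ E] {R : ℝ} {x : E}

noncomputable def antipodalInversion (R : ℝ) (x : E) : E :=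
  -inversion 0 R x

theorem antipodalInversion_eq_smul (R : ℝ) (x : E) :
    antipodalInversion R x = -(R ^ 2 • (‖x‖ ^ 2)⁻¹ • x) := by
  simp only [antipodalInversion, inversion, dist_zero_right, vsub_eq_sub, sub_zero,
    vadd_eq_add, add_zero, smul_smul, div_eq_mul_inv, mul_pow, inv_pow]

theorem norm_antipodalInversion (R : ℝ) (x : E) : ‖antipodalInversion R x‖ = R ^ 2 / ‖x‖ := by
  simpa [antipodalInversion] using dist_inversion_center (0 : E) x R

theorem antipodalInversion_neg (R : ℝ) (x : E) :
    antipodalInversion R (-x) = -antipodalInversion R x := by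
  simp only [antipodalInversion_eq_smul, norm_neg, smul_neg]

theorem antipodalInversion_antipodalInversion (hR : R ≠ 0) (x : E) :
    antipodalInversion R (antipodalInversion R x) = x := by
  change antipodalInversion R (-inversion 0 R x) = x
  rw [antipodalInversion_neg, antipodalInversion, neg_neg, inversion_inversion _ hR]

theorem antipodalInversion_ne_self (R : ℝ) (hx : x ≠ 0) : antipodalInversion R x ≠ x := by
  intro h
  have : (1 + R ^ 2 * (‖x‖ ^ 2)⁻¹) • x = 0 := by
    rw [antipodalInversion_eq_smul] at h
    linear_combination (norm := module) -h
  exact hx ((smul_eq_zero.mp this).resolve_left (by positivity))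

theorem hasFDerivAt_antipodalInversion (hx : x ≠ 0) :
    HasFDerivAt (antipodalInversion R)
      (-((R / ‖x‖) ^ 2 • ((ℝ ∙ x)ᗮ.reflection : E →L[ℝ] E))) x := by
  have h := (hasFDerivAt_inversion (R := R) hx).neg
  rw [dist_zero_right, sub_zero] at h
  exact h

theorem norm_fderiv_antipodalInversion_apply (hx : x ≠ 0) (v : E) :
    ‖fderiv ℝ (antipodalInversion R) x v‖ = (R / ‖x‖) ^ 2 * ‖v‖ := by
  simp [(hasFDerivAt_antipodalInversion hx).fderiv, norm_smul, div_pow]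

theorem conformalFactor_mul_norm_fderiv_antipodalInversion (hR : R ≠ 0) (hx : x ≠ 0) (v : E) :
    (1 + R / ‖antipodalInversion R x‖) ^ 2 * ‖fderiv ℝ (antipodalInversion R) x v‖ =
      (1 + R / ‖x‖) ^ 2 * ‖v‖ := by
  have : ‖x‖ ≠ 0 := norm_ne_zero_iff.mpr hx
  rw [norm_fderiv_antipodalInversion_apply hx, norm_antipodalInversion]
  field_simp
  ring

end Schwarzschild

open Schwarzschild Filter Topology

/-- The antipodal inversion `ψ x = -(m²/4) x / ‖x‖²` of punctured `ℝ³` is an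
isometry of the Schwarzschild metric `h = (1 + m/(2‖x‖))⁴ δ`, is an involution,
and has no fixed points; hence it generates a fixed-point-free `ℤ₂`-action by
isometries. -/
theorem stmt_5 (m : ℝ) (hm : 0 < m)
    (ψ : EuclideanSpace ℝ (Fin 3) → EuclideanSpace ℝ (Fin 3))
    (hψ : ∀ x, x ≠ 0 → ψ x = -((m ^ 2 / 4) • (‖x‖ ^ 2)⁻¹ • x)) :
    (∀ x : EuclideanSpace ℝ (Fin 3), x ≠ 0 →
      DifferentiableAt ℝ ψ x ∧
        ∀ v, (1 + m / (2 * ‖ψ x‖)) ^ 2 * ‖fderiv ℝ ψ x v‖ =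
          (1 + m / (2 * ‖x‖)) ^ 2 * ‖v‖) ∧
    (∀ x : EuclideanSpace ℝ (Fin 3), x ≠ 0 → ψ (ψ x) = x) ∧
    (∀ x : EuclideanSpace ℝ (Fin 3), x ≠ 0 → ψ x ≠ x) := by
  have hR : m / 2 ≠ 0 := by positivity
  have hψ_eq : ∀ x, x ≠ 0 → ψ x = antipodalInversion (m / 2) x := fun x hx => by
    rw [hψ x hx, antipodalInversion_eq_smul, div_pow]
    norm_num
  refine ⟨fun x hx => ?_, fun x hx => ?_, fun x hx => ?_⟩
  · have heq : ψ =ᶠ[𝓝 x] antipodalInversion (m / 2) := (eventually_ne_nhds hx).mono hψ_eq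
    refine ⟨((hasFDerivAt_antipodalInversion hx).congr_of_eventuallyEq heq).differentiableAt,
      fun v => ?_⟩
    rw [heq.fderiv_eq, hψ_eq x hx, ← div_div, ← div_div]
    exact conformalFactor_mul_norm_fderiv_antipodalInversion hR hx v
  · have hψx : antipodalInversion (m / 2) x ≠ 0 := by
      rw [← norm_pos_iff, norm_antipodalInversion]
      positivity
    rw [hψ_eq x hx, hψ_eq _ hψx, antipodalInversion_antipodalInversion hR]
  · rw [hψ_eq x hx]
    exact antipodalInversion_ne_self _ hx
end

section
/- Let m > 0, let a < b, and let γ : [a, b] → ℝ³∖{0} be a continuously differentiable curve. Define its Schwarzschild length L(γ) = ∫_a^b (1 + m/(2‖γ(t)‖))² ‖γ′(t)‖ dt. Then L(γ) ≥ | ‖γ(b)‖ − ‖γ(a)‖ | and L(γ) ≥ (m²/4) · | 1/‖γ(a)‖ − 1/‖γ(b)‖ |. -/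
open Set MeasureTheory intervalIntegral
open scoped RealInnerProductSpace

/-- Lower bounds for the Schwarzschild length
`L(γ) = ∫ (1 + m/(2‖γ(t)‖))² ‖γ'(t)‖ dt` of a `C¹` curve `γ : [a,b] → ℝ³ ∖ {0}`:
`L(γ) ≥ |‖γ(b)‖ - ‖γ(a)‖|` and `L(γ) ≥ (m²/4) |1/‖γ(a)‖ - 1/‖γ(b)‖|`.
(These show curves escaping to infinity or to the deleted origin have infinite
length, i.e. the Schwarzschild manifold is complete.) -/
theorem stmt_7 (m : ℝ) (hm : 0 < m) (a b : ℝ) (hab : a < b)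
    (γ : ℝ → EuclideanSpace ℝ (Fin 3))
    (hγ : ContDiffOn ℝ 1 γ (Set.Icc a b))
    (hγ0 : ∀ t ∈ Set.Icc a b, γ t ≠ 0) :
    |‖γ b‖ - ‖γ a‖| ≤
        ∫ t in a..b, (1 + m / (2 * ‖γ t‖)) ^ 2 * ‖derivWithin γ (Set.Icc a b) t‖ ∧
      m ^ 2 / 4 * |1 / ‖γ a‖ - 1 / ‖γ b‖| ≤
        ∫ t in a..b, (1 + m / (2 * ‖γ t‖)) ^ 2 * ‖derivWithin γ (Set.Icc a b) t‖ := by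
  have hI : UniqueDiffOn ℝ (Icc a b) := uniqueDiffOn_Icc hab
  set v : ℝ → EuclideanSpace ℝ (Fin 3) := fun t => derivWithin γ (Set.Icc a b) t with hv
  have hγdiff : DifferentiableOn ℝ γ (Icc a b) := hγ.differentiableOn one_ne_zero
  have hγd : ∀ t ∈ Icc a b, HasDerivWithinAt γ (v t) (Icc a b) t := fun t ht =>
    (hγdiff t ht).hasDerivWithinAt
  have hvc : ContinuousOn v (Icc a b) := (hγ.derivWithin (m := 0) hI (by norm_num)).continuousOn
  have hγc : ContinuousOn γ (Icc a b) := hγ.continuousOn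
  have hr : ∀ t ∈ Icc a b, (0:ℝ) < ‖γ t‖ := fun t ht => norm_pos_iff.mpr (hγ0 t ht)
  -- derivative of r = ‖γ‖
  have hrd : ∀ t ∈ Icc a b, HasDerivWithinAt (fun s => ‖γ s‖)
      (⟪v t, γ t⟫ / ‖γ t‖) (Icc a b) t := by
    intro t ht
    have hg : HasDerivWithinAt (fun s => ⟪γ s, γ s⟫)
        (⟪γ t, v t⟫ + ⟪v t, γ t⟫) (Icc a b) t :=
      (hγd t ht).inner ℝ (hγd t ht)
    have hne : ⟪γ t, γ t⟫ ≠ 0 := by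
      rw [real_inner_self_eq_norm_sq]
      exact pow_ne_zero 2 (ne_of_gt (hr t ht))
    have := (Real.hasDerivAt_sqrt hne).comp_hasDerivWithinAt t hg
    have heq : (fun s => Real.sqrt ⟪γ s, γ s⟫) = fun s => ‖γ s‖ := by
      funext s
      rw [real_inner_self_eq_norm_sq, Real.sqrt_sq (norm_nonneg _)]
    simp only [Function.comp_def] at this
    rw [heq] at this
    refine this.congr_deriv ?_
    rw [real_inner_self_eq_norm_sq, Real.sqrt_sq (norm_nonneg _), real_inner_comm (γ t)]
    have := hr t ht
    field_simp
    ring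
  -- the deriv bound
  have hrb : ∀ t ∈ Icc a b, |⟪v t, γ t⟫ / ‖γ t‖| ≤ ‖v t‖ := by
    intro t ht
    rw [abs_div, abs_of_pos (hr t ht), div_le_iff₀ (hr t ht)]
    exact abs_real_inner_le_norm _ _
  -- continuity of things
  have hrc : ContinuousOn (fun s => ‖γ s‖) (Icc a b) := hγc.norm
  have hr'c : ContinuousOn (fun t => ⟪v t, γ t⟫ / ‖γ t‖) (Icc a b) :=
    (hvc.inner hγc).div hrc (fun t ht => (hr t ht).ne')
  have hic : ContinuousOn (fun t => (1 + m / (2 * ‖γ t‖)) ^ 2 * ‖v t‖) (Icc a b) := by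
    refine ContinuousOn.mul ?_ hvc.norm
    refine (continuousOn_const.add (continuousOn_const.div ?_ ?_)).pow 2
    · exact continuousOn_const.mul hrc
    · intro t ht
      have := hr t ht
      positivity
  have hii : IntervalIntegrable (fun t => (1 + m / (2 * ‖γ t‖)) ^ 2 * ‖v t‖) volume a b :=
    hic.intervalIntegrable_of_Icc hab.le
  -- generic FTC + bound machinery
  have key : ∀ (f f' : ℝ → ℝ), ContinuousOn f (Icc a b) →
      (∀ t ∈ Icc a b, HasDerivWithinAt f (f' t) (Icc a b) t) →
      ContinuousOn f' (Icc a b) →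
      (∀ t ∈ Icc a b, |f' t| ≤ (1 + m / (2 * ‖γ t‖)) ^ 2 * ‖v t‖) →
      |f b - f a| ≤ ∫ t in a..b, (1 + m / (2 * ‖γ t‖)) ^ 2 * ‖v t‖ := by
    intro f f' hfc hfd hf'c hbd
    have hint : IntervalIntegrable f' volume a b := hf'c.intervalIntegrable_of_Icc hab.le
    have hderiv : ∀ x ∈ Ioo a b, HasDerivWithinAt f (f' x) (Ioi x) x := by
      intro x hx
      have h1 : HasDerivAt f (f' x) x := by
        refine (hfd x (Ioo_subset_Icc_self hx)).hasDerivAt ?_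
        exact Icc_mem_nhds hx.1 hx.2
      exact h1.hasDerivWithinAt
    have hftc : ∫ t in a..b, f' t = f b - f a :=
      integral_eq_sub_of_hasDeriv_right_of_le hab.le hfc hderiv hint
    rw [← hftc]
    calc |∫ t in a..b, f' t| ≤ ∫ t in a..b, |f' t| :=
          abs_integral_le_integral_abs hab.le
      _ ≤ ∫ t in a..b, (1 + m / (2 * ‖γ t‖)) ^ 2 * ‖v t‖ := by
          refine integral_mono_on hab.le (hint.abs) hii hbd
  constructor
  · refine key (fun s => ‖γ s‖) (fun t => ⟪v t, γ t⟫ / ‖γ t‖) hrc hrd hr'c ?_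
    intro t ht
    refine (hrb t ht).trans ?_
    have h1 : (0:ℝ) ≤ m / (2 * ‖γ t‖) := by
      have := hr t ht; positivity
    nlinarith [norm_nonneg (v t), mul_nonneg h1 (norm_nonneg (v t)), mul_nonneg (mul_nonneg h1 h1) (norm_nonneg (v t))]
  · have h2 : m ^ 2 / 4 * |1 / ‖γ a‖ - 1 / ‖γ b‖|
        = |m ^ 2 / 4 * (‖γ b‖)⁻¹ - m ^ 2 / 4 * (‖γ a‖)⁻¹| := by
      rw [← mul_sub, abs_mul, abs_of_nonneg (by positivity : (0:ℝ) ≤ m ^ 2 / 4),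
        abs_sub_comm]
      simp [one_div]
    rw [h2]
    refine key (fun s => m ^ 2 / 4 * (‖γ s‖)⁻¹)
      (fun t => m ^ 2 / 4 * (-(⟪v t, γ t⟫ / ‖γ t‖) / ‖γ t‖ ^ 2)) ?_ ?_ ?_ ?_
    · exact continuousOn_const.mul (hrc.inv₀ fun t ht => (hr t ht).ne')
    · intro t ht
      exact ((hrd t ht).inv (hr t ht).ne').const_mul _
    · refine continuousOn_const.mul ((hr'c.neg.div (hrc.pow 2)) ?_)
      exact fun t ht => pow_ne_zero 2 (hr t ht).ne'
    · intro t ht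
      have h0 := hr t ht
      have hA := hrb t ht
      have hV := norm_nonneg (v t)
      have habs : |m ^ 2 / 4 * (-(⟪v t, γ t⟫ / ‖γ t‖) / ‖γ t‖ ^ 2)|
          = m ^ 2 / 4 * (|⟪v t, γ t⟫ / ‖γ t‖| / ‖γ t‖ ^ 2) := by
        rw [abs_mul, abs_of_nonneg (by positivity : (0:ℝ) ≤ m ^ 2 / 4), abs_div,
          abs_neg, abs_of_nonneg (by positivity : (0:ℝ) ≤ ‖γ t‖ ^ 2)]
      rw [habs]
      calc m ^ 2 / 4 * (|⟪v t, γ t⟫ / ‖γ t‖| / ‖γ t‖ ^ 2)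
          ≤ m ^ 2 / 4 * (‖v t‖ / ‖γ t‖ ^ 2) := by gcongr
        _ = (m / (2 * ‖γ t‖)) ^ 2 * ‖v t‖ := by ring
        _ ≤ (1 + m / (2 * ‖γ t‖)) ^ 2 * ‖v t‖ := by
            have hx : (0:ℝ) ≤ m / (2 * ‖γ t‖) := by positivity
            have := pow_le_pow_left₀ hx (le_add_of_nonneg_left zero_le_one :
              m / (2 * ‖γ t‖) ≤ 1 + m / (2 * ‖γ t‖)) 2
            exact mul_le_mul_of_nonneg_right this hV
end
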